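/- For every k ≥ 1, the graph BC(k) is a proper disk graph: there exists a family of closed disks (D_v)_{v ∈ V(BC(k))} in ℝ², with D_v of center c_v and radius r_v > 0, such that distinct vertices u, v are adjacent in BC(k) if and only if D_u ∩ D_v ≠ ∅, and moreover no disk is contained in another, i.e. D_u ⊄ D_v for all u ≠ v. -/

import Mathlib

open Metric
open Metric

noncomputable abbrev E2 := EuclideanSpace ℝ (Fin 2)

noncomputable def pt (a b : ℝ) : EuclideanSpace ℝ (Fin 2) :=
  (WithLp.equiv 2 (Fin 2 → ℝ)).symm ![a, b]

lemma dist_pt (a b a' b' : ℝ) :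
    dist (pt a b) (pt a' b') = Real.sqrt ((a - a')^2 + (b - b')^2) := by
  rw [EuclideanSpace.dist_eq]
  simp [pt, Fin.sum_univ_two, Real.dist_eq, sq_abs]

lemma sqrt_le_of_sq {s a : ℝ} (ha : 0 ≤ a) (h : s ≤ a^2) : Real.sqrt s ≤ a := by
  calc Real.sqrt s ≤ Real.sqrt (a^2) := Real.sqrt_le_sqrt h
  _ = a := Real.sqrt_sq ha

lemma le_sqrt_of_sq {s a : ℝ} (ha : 0 ≤ a) (h : a^2 ≤ s) : a ≤ Real.sqrt s := by
  calc a = Real.sqrt (a^2) := (Real.sqrt_sq ha).symm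
  _ ≤ Real.sqrt s := Real.sqrt_le_sqrt h

lemma lt_sqrt_of_sq {s a : ℝ} (h : a^2 < s) (ha : 0 ≤ a) : a < Real.sqrt s := by
  calc a = Real.sqrt (a^2) := (Real.sqrt_sq ha).symm
  _ < Real.sqrt s := Real.sqrt_lt_sqrt (sq_nonneg a) h

lemma ball_inter_nonempty {x y : E2} {r s : ℝ} (hr : 0 ≤ r) (hs : 0 ≤ s)
    (h : dist x y ≤ r + s) : (closedBall x r ∩ closedBall y s).Nonempty := by
  rcases eq_or_lt_of_le (add_nonneg hr hs) with h0 | h0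
  · refine ⟨x, by simpa using hr, ?_⟩
    simp only [mem_closedBall]
    linarith [dist_nonneg (x := x) (y := y)]
  · refine ⟨x + (r / (r + s)) • (y - x), ?_, ?_⟩
    · simp only [mem_closedBall, dist_eq_norm]
      have : x + (r / (r + s)) • (y - x) - x = (r / (r + s)) • (y - x) := by abel
      rw [this, norm_smul, Real.norm_eq_abs, abs_of_nonneg (by positivity)]
      have hd : ‖y - x‖ ≤ r + s := by rw [← dist_eq_norm']; exact h
      calc r / (r + s) * ‖y - x‖ ≤ r / (r + s) * (r + s) := by
            apply mul_le_mul_of_nonneg_left hd (by positivity)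
        _ = r := by field_simp
    · simp only [mem_closedBall, dist_eq_norm]
      have : x + (r / (r + s)) • (y - x) - y = (r / (r + s) - 1) • (y - x) := by
        rw [sub_smul, one_smul]; abel
      rw [this, norm_smul, Real.norm_eq_abs]
      have h1 : r / (r + s) - 1 = -(s / (r+s)) := by field_simp; ring
      rw [h1, abs_neg, abs_of_nonneg (by positivity)]
      have hd : ‖y - x‖ ≤ r + s := by rw [← dist_eq_norm']; exact h
      calc s / (r + s) * ‖y - x‖ ≤ s / (r + s) * (r + s) := by
            apply mul_le_mul_of_nonneg_left hd (by positivity)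
        _ = s := by field_simp

lemma ball_subset_imp {x y : E2} {r s : ℝ} (hr : 0 ≤ r)
    (h : closedBall x r ⊆ closedBall y s) : dist x y + r ≤ s := by
  by_cases hxy : x = y
  · subst hxy
    have := h (show x + r • EuclideanSpace.single (0 : Fin 2) (1:ℝ) ∈ closedBall x r by
      simp only [mem_closedBall, dist_eq_norm]
      have : x + r • EuclideanSpace.single (0 : Fin 2) (1:ℝ) - x
          = r • EuclideanSpace.single (0 : Fin 2) (1:ℝ) := by abel
      rw [this, norm_smul, Real.norm_eq_abs, abs_of_nonneg hr, EuclideanSpace.norm_single]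
      simp)
    simp only [mem_closedBall, dist_eq_norm] at this
    have h2 : x + r • EuclideanSpace.single (0 : Fin 2) (1:ℝ) - x
        = r • EuclideanSpace.single (0 : Fin 2) (1:ℝ) := by abel
    rw [h2, norm_smul, Real.norm_eq_abs, abs_of_nonneg hr, EuclideanSpace.norm_single] at this
    simpa using this
  · set d := dist x y with hd
    have hd0 : 0 < d := dist_pos.mpr hxy
    have := h (show x + (r / d) • (x - y) ∈ closedBall x r by
      simp only [mem_closedBall, dist_eq_norm]
      have h2 : x + (r / d) • (x - y) - x = (r / d) • (x - y) := by abel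
      rw [h2, norm_smul, Real.norm_eq_abs, abs_of_nonneg (by positivity), ← dist_eq_norm, ← hd]
      rw [div_mul_cancel₀ _ (ne_of_gt hd0)])
    simp only [mem_closedBall, dist_eq_norm] at this
    have h2 : x + (r / d) • (x - y) - y = (1 + r / d) • (x - y) := by
      rw [add_smul, one_smul]; abel
    rw [h2, norm_smul, Real.norm_eq_abs, abs_of_nonneg (by positivity), ← dist_eq_norm, ← hd] at this
    have : (1 + r / d) * d = d + r := by field_simp
    linarith [h (show x ∈ closedBall x r by simp [hr]), this ▸ ‹(1 + r/d) * d ≤ s›]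



/-- Vertex set of `BC(n+1)`: `BCType 0` is a single vertex, and `BCType (n+1)`
consists of a new (universal) vertex `none` together with two disjoint copies
of `BCType n`. -/
def BCType : ℕ → Type
  | 0 => Unit
  | n + 1 => Option (Bool × BCType n)

/-- Adjacency on `Option (Bool × α)`: `none` is universal, and two vertices of
the copies are adjacent iff they lie in the same copy and are adjacent there. -/
def optAdj {α : Type} (A : α → α → Prop) : Option (Bool × α) → Option (Bool × α) → Prop
  | none, none => False
  | none, some _ => True
  | some _, none => True
  | some (b, x), some (c, y) => b = c ∧ A x y

/-- Adjacency relation of `BC(n+1)` on `BCType n`. -/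
def BCAdj : (n : ℕ) → BCType n → BCType n → Prop
  | 0 => fun _ _ => False
  | n + 1 => optAdj (BCAdj n)

theorem optAdj_symm {α : Type} {A : α → α → Prop} (hA : ∀ x y, A x y → A y x) :
    ∀ p q, optAdj A p q → optAdj A q p
  | none, none, h => h
  | none, some _, _ => trivial
  | some _, none, _ => trivial
  | some (_, x), some (_, y), h => ⟨h.1.symm, hA x y h.2⟩

theorem optAdj_irrefl {α : Type} {A : α → α → Prop} (hA : ∀ x, ¬ A x x) :
    ∀ p, ¬ optAdj A p p
  | none, h => h
  | some (_, x), h => hA x h.2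

theorem BCAdj_symm : ∀ n, ∀ p q : BCType n, BCAdj n p q → BCAdj n q p
  | 0, _, _, h => h.elim
  | n + 1, p, q, h => optAdj_symm (BCAdj_symm n) p q h

theorem BCAdj_irrefl : ∀ n, ∀ p : BCType n, ¬ BCAdj n p p
  | 0, _, h => h
  | n + 1, p, h => optAdj_irrefl (BCAdj_irrefl n) p h

/-- The graph `BC(n+1)`: `BCGraph 0 = BC(1)` is a single vertex, and
`BCGraph (n+1) = BC(n+2)` is obtained by adding a universal vertex to the
disjoint union of two copies of `BCGraph n`. -/
def BCGraph (n : ℕ) : SimpleGraph (BCType n) where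
  Adj := BCAdj n
  symm := ⟨by intro p q h; exact BCAdj_symm n p q h⟩
  loopless := ⟨by intro p h; exact BCAdj_irrefl n p h⟩

set_option maxHeartbeats 2000000 in
/-- Key induction: BC(n+1) has a representation by coordinates `(x v, y v)` and radii
`r v`, all disks inside the square of side `M`, each disk crossing the `x`-axis with
margin `δ`, adjacency iff distance `≤` sum of radii, and no containments. -/
theorem BC_rep : ∀ n : ℕ, ∃ (x y r : BCType n → ℝ) (M δ : ℝ),
    0 < δ ∧ δ ≤ M ∧
    (∀ v, 0 < r v) ∧
    (∀ v, |y v| + δ ≤ r v) ∧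
    (∀ v, |x v| + r v ≤ M) ∧
    (∀ v, |y v| + r v ≤ M) ∧
    (∀ u v, u ≠ v →
      (BCAdj n u v ↔ Real.sqrt ((x u - x v)^2 + (y u - y v)^2) ≤ r u + r v)) ∧
    (∀ u v, u ≠ v → ¬ (Real.sqrt ((x u - x v)^2 + (y u - y v)^2) + r u ≤ r v)) := by
  intro n
  induction n with
  | zero =>
    refine ⟨fun _ => 0, fun _ => 0, fun _ => 1, 2, 1, one_pos, by norm_num,
      fun _ => one_pos, by norm_num, by norm_num, by norm_num, ?_, ?_⟩ <;>
    · intro u v hne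
      exact absurd rfl hne
  | succ n ih =>
    obtain ⟨x, y, r, M, δ, hδ, hδM, hr, hyr, hxM, hyM, hadj, hsub⟩ := ih
    have hM : 0 < M := lt_of_lt_of_le hδ hδM
    obtain ⟨N, hNdef⟩ : ∃ t : ℝ, t = 13*M*M/δ + M + δ := ⟨_, rfl⟩
    have hN1 : 13*M*M ≤ N*δ := by
      have h0 : (13*M*M/δ)*δ = 13*M*M := div_mul_cancel₀ _ (ne_of_gt hδ)
      have : N*δ = 13*M*M + M*δ + δ*δ := by rw [hNdef]; ring_nf; ring_nf at h0; nlinarith [h0]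
      nlinarith [mul_pos hM hδ, mul_pos hδ hδ]
    have hMN : M + δ ≤ N := by
      have : 0 ≤ 13*M*M/δ := by positivity
      rw [hNdef]; linarith
    have hN0 : 0 < N := by linarith
    obtain ⟨R, hRdef⟩ : ∃ t : ℝ, t = N + δ/2 := ⟨_, rfl⟩
    have hMR : M < R := by rw [hRdef]; linarith
    have hrM : ∀ v, r v ≤ M := fun v => by have := hxM v; have := abs_nonneg (x v); linarith
    have hδr : ∀ v, δ ≤ r v := fun v => by have := hyr v; have := abs_nonneg (y v); linarith
    -- the new representation
    obtain ⟨x', hx'n, hx'f, hx't⟩ : ∃ f : BCType (n+1) → ℝ, f none = 5*M/2 ∧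
        (∀ w, f (some (false, w)) = x w) ∧ (∀ w, f (some (true, w)) = x w + 5*M) :=
      ⟨fun p => match p with
        | none => 5*M/2 | some (false, w) => x w | some (true, w) => x w + 5*M,
        rfl, fun _ => rfl, fun _ => rfl⟩
    obtain ⟨y', hy'n, hy's⟩ : ∃ f : BCType (n+1) → ℝ, f none = -N ∧
        (∀ b w, f (some (b, w)) = y w) :=
      ⟨fun p => match p with | none => -N | some (_, w) => y w, rfl, fun _ _ => rfl⟩
    obtain ⟨r', hr'n, hr's⟩ : ∃ f : BCType (n+1) → ℝ, f none = R ∧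
        (∀ b w, f (some (b, w)) = r w) :=
      ⟨fun p => match p with | none => R | some (_, w) => r w, rfl, fun _ _ => rfl⟩
    -- core geometric estimates
    have hball : ∀ A b ρ, |A - 5*M/2| ≤ 7*M/2 → |b| + δ ≤ ρ → ρ ≤ M →
        (A - 5*M/2)^2 + (b + N)^2 ≤ (ρ + R)^2 := by
      intro A b ρ hA hb hρ
      have hA2 : (A - 5*M/2)^2 ≤ (7*M/2)^2 := by
        rw [← sq_abs]; exact pow_le_pow_left₀ (abs_nonneg _) hA 2
      have hb1 : b ≤ ρ - δ := by linarith [le_abs_self b]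
      have hb2 : -(ρ - δ) ≤ b := by linarith [neg_abs_le b]
      have hδρ : δ ≤ ρ := by linarith [abs_nonneg b]
      have key : (b + N)^2 ≤ (N + ρ - δ)^2 := by nlinarith [mul_nonneg (by linarith : (0:ℝ) ≤ ρ - δ - b) (by linarith : (0:ℝ) ≤ 2*N + ρ - δ + b)]
      rw [hRdef]
      nlinarith [hN1, mul_le_mul_of_nonneg_right hδρ hδ.le]
    have hfar : ∀ S A b ρ, S = (A - 5*M/2)^2 + (b + N)^2 → |b| + δ ≤ ρ → ρ ≤ M →
        R < Real.sqrt S + ρ := by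
      intro S A b ρ hS hb hρ
      have hb2 : -(ρ - δ) ≤ b := by linarith [neg_abs_le b]
      have h0 : 0 ≤ N - ρ + δ := by linarith
      have hle : N - ρ + δ ≤ Real.sqrt S := by
        apply le_sqrt_of_sq h0
        rw [hS]
        nlinarith [sq_nonneg (A - 5*M/2)]
      rw [hRdef]; linarith
    have hcross : ∀ S au bu ru av bv rv, S = (au + 5*M - av)^2 + (bu - bv)^2 →
        |au| + ru ≤ M → |av| + rv ≤ M → 0 < ru → 0 < rv → ru + rv < Real.sqrt S := by
      intro S au bu ru av bv rv hS h1 h2 h3 h4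
      have k1 : -(M - ru) ≤ au := by linarith [neg_abs_le au]
      have k2 : av ≤ M - rv := by linarith [le_abs_self av]
      have key : 3*M + (ru + rv) ≤ au + 5*M - av := by linarith
      apply lt_sqrt_of_sq
      · rw [hS]
        nlinarith [sq_nonneg (bu - bv), key, mul_pos hM (add_pos h3 h4), mul_pos hM hM]
      · linarith
    have hAbnd : ∀ (b : Bool) w, |x' (some (b, w)) - 5*M/2| ≤ 7*M/2 := by
      intro b w
      have hxw : |x w| ≤ M := by linarith [hxM w, hr w]
      obtain ⟨l1, l2⟩ := abs_le.mp hxw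
      cases b
      · rw [hx'f]; rw [abs_le]; constructor <;> linarith
      · rw [hx't]; rw [abs_le]; constructor <;> linarith
    refine ⟨x', y', r', 2*N + 6*M + 1, δ/2, by linarith, by linarith, ?_, ?_, ?_, ?_, ?_, ?_⟩
    · rintro (_ | ⟨b, w⟩)
      · rw [hr'n]; linarith
      · rw [hr's]; exact hr w
    · rintro (_ | ⟨b, w⟩)
      · rw [hy'n, hr'n, abs_neg, abs_of_pos hN0, hRdef]
      · rw [hy's, hr's]; linarith [hyr w]
    · rintro (_ | ⟨b, w⟩)
      · rw [hx'n, hr'n, abs_of_pos (by linarith : (0:ℝ) < 5*M/2), hRdef]; linarith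
      · cases b
        · rw [hx'f, hr's]; linarith [hxM w]
        · rw [hx't, hr's]
          have := abs_add_le (x w) (5*M)
          have h5 : |5*M| = 5*M := abs_of_pos (by linarith)
          linarith [hxM w]
    · rintro (_ | ⟨b, w⟩)
      · rw [hy'n, hr'n, abs_neg, abs_of_pos hN0, hRdef]; linarith
      · rw [hy's, hr's]; linarith [hyM w]
    · -- adjacency
      rintro (_ | ⟨b, w⟩) (_ | ⟨b', w'⟩) hne
      · exact absurd rfl hne
      · -- none vs some
        simp only [BCAdj, optAdj]
        rw [hx'n, hy'n, hr'n, hy's b' w', hr's b' w']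
        constructor
        · intro _
          apply sqrt_le_of_sq
          · linarith [hr w']
          · have := hball (x' (some (b', w'))) (y w') (r w') (hAbnd b' w') (hyr w') (hrM w')
            nlinarith [this]
        · intro _; exact trivial
      · -- some vs none
        simp only [BCAdj, optAdj]
        rw [hx'n, hy'n, hr'n, hy's b w, hr's b w]
        constructor
        · intro _
          apply sqrt_le_of_sq
          · linarith [hr w]
          · have := hball (x' (some (b, w))) (y w) (r w) (hAbnd b w) (hyr w) (hrM w)
            nlinarith [this]
        · intro _; exact trivial
      · -- some vs some
        simp only [BCAdj, optAdj]
        rw [hy's b w, hr's b w, hy's b' w', hr's b' w']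
        cases b <;> cases b'
        · rw [hx'f, hx'f]
          have hww : w ≠ w' := fun h => hne (by rw [h])
          rw [hadj w w' hww]
          simp
        · rw [hx'f, hx't]
          constructor
          · rintro ⟨h, -⟩; exact absurd h (by simp)
          · intro hc
            have := hcross ((x w - (x w' + 5*M))^2 + (y w - y w')^2)
              (x w') (y w') (r w') (x w) (y w) (r w) (by ring)
              (hxM w') (hxM w) (hr w') (hr w)
            linarith
        · rw [hx't, hx'f]
          constructor
          · rintro ⟨h, -⟩; exact absurd h (by simp)
          · intro hc
            have := hcross ((x w + 5*M - x w')^2 + (y w - y w')^2)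
              (x w) (y w) (r w) (x w') (y w') (r w') (by ring)
              (hxM w) (hxM w') (hr w) (hr w')
            linarith
        · rw [hx't, hx't]
          have hww : w ≠ w' := fun h => hne (by rw [h])
          rw [show (x w + 5*M - (x w' + 5*M))^2 + (y w - y w')^2
              = (x w - x w')^2 + (y w - y w')^2 from by ring]
          rw [hadj w w' hww]
          simp
    · -- non-containment
      rintro (_ | ⟨b, w⟩) (_ | ⟨b', w'⟩) hne
      · exact absurd rfl hne
      · -- big ⊆ small impossible
        rw [hx'n, hy'n, hr'n, hr's b' w']
        intro hc
        linarith [Real.sqrt_nonneg ((5*M/2 - x' (some (b', w')))^2 + (-N - y' (some (b', w')))^2),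
          hrM w', hMR]
      · -- small ⊆ big impossible
        rw [hx'n, hy'n, hr'n, hy's b w, hr's b w]
        intro hc
        have := hfar ((x' (some (b, w)) - 5*M/2)^2 + (y w - -N)^2)
          (x' (some (b, w))) (y w) (r w) (by ring) (hyr w) (hrM w)
        linarith
      · rw [hy's b w, hr's b w, hy's b' w', hr's b' w']
        cases b <;> cases b'
        · rw [hx'f, hx'f]
          exact hsub w w' (fun h => hne (by rw [h]))
        · rw [hx'f, hx't]
          intro hc
          have := hcross ((x w - (x w' + 5*M))^2 + (y w - y w')^2)
            (x w') (y w') (r w') (x w) (y w) (r w) (by ring)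
            (hxM w') (hxM w) (hr w') (hr w)
          linarith [hr w]
        · rw [hx't, hx'f]
          intro hc
          have := hcross ((x w + 5*M - x w')^2 + (y w - y w')^2)
            (x w) (y w) (r w) (x w') (y w') (r w') (by ring)
            (hxM w) (hxM w') (hr w) (hr w')
          linarith [hr w]
        · rw [hx't, hx't]
          rw [show (x w + 5*M - (x w' + 5*M))^2 + (y w - y w')^2
              = (x w - x w')^2 + (y w - y w')^2 from by ring]
          exact hsub w w' (fun h => hne (by rw [h]))


/-- For every `k ≥ 1`, the graph `BC(k)` is a proper disk graph: it has a disk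
representation (closed disks with positive radii, distinct vertices adjacent
iff their disks intersect) in which no disk is contained in another. -/
theorem BC_isProperDiskGraph (k : ℕ) (hk : 1 ≤ k) :
    ∃ (c : BCType (k - 1) → EuclideanSpace ℝ (Fin 2)) (r : BCType (k - 1) → ℝ),
      (∀ v, 0 < r v) ∧
      (∀ u v, u ≠ v → ((BCGraph (k - 1)).Adj u v ↔
        (Metric.closedBall (c u) (r u) ∩ Metric.closedBall (c v) (r v)).Nonempty)) ∧
      (∀ u v, u ≠ v →
        ¬ Metric.closedBall (c u) (r u) ⊆ Metric.closedBall (c v) (r v)) := by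
  obtain ⟨x, y, r, M, δ, hδ, hδM, hr, hyr, hxM, hyM, hadj, hsub⟩ := BC_rep (k - 1)
  refine ⟨fun v => pt (x v) (y v), r, hr, ?_, ?_⟩
  · intro u v hne
    have hd : dist (pt (x u) (y u)) (pt (x v) (y v))
        = Real.sqrt ((x u - x v)^2 + (y u - y v)^2) := dist_pt _ _ _ _
    rw [show (BCGraph (k-1)).Adj u v = BCAdj (k-1) u v from rfl, hadj u v hne]
    constructor
    · intro h
      exact ball_inter_nonempty (hr u).le (hr v).le (by rw [hd]; exact h)
    · intro h
      have := Metric.dist_le_add_of_nonempty_closedBall_inter_closedBall h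
      rw [hd] at this
      exact this
  · intro u v hne hc
    have hd : dist (pt (x u) (y u)) (pt (x v) (y v))
        = Real.sqrt ((x u - x v)^2 + (y u - y v)^2) := dist_pt _ _ _ _
    exact hsub u v hne (by rw [← hd]; exact ball_subset_imp (hr u).le hc)
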